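/- arXiv:1412.7882 — 5 statements merged into one kernel-verified Lean document; each statement's English description precedes it below -/
import Mathlib

section
/- Let β^(4) = (β_{ij})_{0≤i+j≤4} be a real sequence whose 6×6 moment matrix M(2) is positive semidefinite with rank M(2) = 5, and suppose the column of M(2) labeled XY is the zero vector (equivalently, β_{11} = β_{21} = β_{12} = β_{31} = β_{22} = β_{13} = 0). Then β^(4) admits a representing measure μ whose support has cardinality at most 6. -/
/-!
When the column `XY` of `M(2)` vanishes, the moments are those of a functional `L` that sees
no mixed monomials, so for `P = p + q X + r X² + q' Y + r' Y²` the form `L(P²)` is the sum of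
the Hankel forms of the two axis marginals `(β i 0)` and `(β 0 j)`, which share the mass
`β 0 0`. Rank 5 with kernel spanned by `XY` makes `L(P²)` positive definite, and completing
the square (a Schur complement) shows that `β 0 0` can be split as `a + b` so that each
marginal, with its mass replaced by `a` resp. `b`, has a positive definite `3 × 3` Hankel
matrix. Each of these is represented by a three-atomic measure on its axis: there is a monic
cubic `P` with `L(P) = L(t P) = 0`, positivity of `L` on squares forces its roots to be real
and simple, and the Lagrange weights at its roots are `L((t - b)² (t - c)²) /
((a - b)² (a - c)²) > 0`. The two measures together give at most six atoms.
-/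

/-- Index set for the moment matrix of degree `n`:
pairs `(i,j)` of nonnegative integers with `i + j ≤ n`. -/
abbrev MIdx (n : ℕ) := {ij : Fin (n+1) × Fin (n+1) // (ij.1 : ℕ) + (ij.2 : ℕ) ≤ n}

/-- The moment matrix `M(n)` of a real sequence `β = (β_{ij})`:
`M(n)[(i,j),(k,l)] = β_{i+k, j+l}`. -/
def momentMatrix (n : ℕ) (β : ℕ → ℕ → ℝ) : Matrix (MIdx n) (MIdx n) ℝ :=
  fun p q => β ((p.val.1 : ℕ) + (q.val.1 : ℕ)) ((p.val.2 : ℕ) + (q.val.2 : ℕ))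

open Matrix
open scoped ComplexOrder

theorem Matrix.PosSemidef.dotProduct_mulVec_pos_of_rank_add_one {n 𝕜 : Type*} [Fintype n]
    [DecidableEq n] [RCLike 𝕜] {M : Matrix n n 𝕜} (hM : M.PosSemidef)
    (hrank : M.rank + 1 = Fintype.card n) {i : n} (hcol : ∀ j, M j i = 0)
    {v : n → 𝕜} (hv : v ≠ 0) (hvi : v i = 0) : 0 < star v ⬝ᵥ M *ᵥ v := by
  have hker : LinearMap.ker M.mulVecLin = 𝕜 ∙ Pi.single i 1 := by
    refine (Submodule.eq_of_le_of_finrank_le ?_ ?_).symm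
    · rw [Submodule.span_singleton_le_iff_mem, LinearMap.mem_ker, mulVecLin_apply,
        mulVec_single_one]
      exact funext hcol
    · have := LinearMap.finrank_range_add_finrank_ker M.mulVecLin
      rw [Module.finrank_fintype_fun_eq_card] at this
      rw [finrank_span_singleton (by simp)]
      unfold Matrix.rank at hrank
      omega
  refine (hM.dotProduct_mulVec_nonneg v).lt_of_ne fun h => hv ?_
  obtain ⟨c, hc⟩ := Submodule.mem_span_singleton.1 <| show v ∈ 𝕜 ∙ Pi.single i 1 by
    rw [← hker, LinearMap.mem_ker, mulVecLin_apply, ← hM.dotProduct_mulVec_zero_iff, h.symm]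
  have : c = 0 := by simpa [← hc] using hvi
  simp [← hc, this]

/-- `L((p + q t + r t²)²)` for the functional `L : t ^ n ↦ γ n`. -/
def hankelForm (γ : ℕ → ℝ) (p q r : ℝ) : ℝ :=
  p ^ 2 * γ 0 + 2 * p * q * γ 1 + (2 * p * r + q ^ 2) * γ 2 + 2 * q * r * γ 3 + r ^ 2 * γ 4

def HankelPosDef (γ : ℕ → ℝ) : Prop :=
  ∀ p q r : ℝ, (p, q, r) ≠ 0 → 0 < hankelForm γ p q r

/-- `(γ 1, γ 2) K⁻¹ (γ 1, γ 2)ᵀ` for `K = [γ 2, γ 3; γ 3, γ 4]`, so that `γ 0 - hankelMinMass γ`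
is the Schur complement of `K` in the Hankel matrix of `γ`. -/
noncomputable def hankelMinMass (γ : ℕ → ℝ) : ℝ :=
  (γ 1 ^ 2 * γ 4 - 2 * γ 1 * γ 2 * γ 3 + γ 2 ^ 3) / (γ 2 * γ 4 - γ 3 ^ 2)

section Hankel

variable {γ : ℕ → ℝ}

theorem hankelForm_update_zero (γ : ℕ → ℝ) (a p q r : ℝ) :
    hankelForm (Function.update γ 0 a) p q r = hankelForm γ p q r + (a - γ 0) * p ^ 2 := by
  simp only [hankelForm, Function.update_self, ne_eq, one_ne_zero, not_false_eq_true,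
    Function.update_of_ne, OfNat.ofNat_ne_zero]
  ring

theorem hankelForm_zero_zero_zero (γ : ℕ → ℝ) : hankelForm γ 0 0 0 = 0 := by
  simp [hankelForm]

theorem det_pos_of_hankelForm_zero_pos (h : ∀ q r : ℝ, (q, r) ≠ 0 → 0 < hankelForm γ 0 q r) :
    0 < γ 2 * γ 4 - γ 3 ^ 2 := by
  have h2 : 0 < γ 2 := by simpa [hankelForm] using h 1 0 (by simp)
  have h3 := h (γ 3) (-γ 2) (by simp [h2.ne'])
  simp only [hankelForm] at h3
  nlinarith

theorem exists_hankelForm_eq_minMass_add (h : γ 2 * γ 4 - γ 3 ^ 2 ≠ 0) :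
    ∃ q₀ r₀ : ℝ, ∀ p q r : ℝ, hankelForm γ p q r =
      (γ 0 - hankelMinMass γ) * p ^ 2 + hankelForm γ 0 (q - p * q₀) (r - p * r₀) := by
  refine ⟨-(γ 4 * γ 1 - γ 3 * γ 2) / (γ 2 * γ 4 - γ 3 ^ 2),
    -(γ 2 ^ 2 - γ 3 * γ 1) / (γ 2 * γ 4 - γ 3 ^ 2), fun p q r => ?_⟩
  simp only [hankelForm, hankelMinMass]
  field_simp
  ring

theorem hankelPosDef_update_zero_of_minMass_lt
    (h : ∀ q r : ℝ, (q, r) ≠ 0 → 0 < hankelForm γ 0 q r) {a : ℝ} (ha : hankelMinMass γ < a) :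
    HankelPosDef (Function.update γ 0 a) := by
  obtain ⟨q₀, r₀, hγ⟩ := exists_hankelForm_eq_minMass_add (det_pos_of_hankelForm_zero_pos h).ne'
  intro p q r hpqr
  rw [hankelForm_update_zero, hγ]
  rcases eq_or_ne p 0 with rfl | hp
  · have : (q, r) ≠ 0 := by simpa using hpqr
    simpa using h q r this
  · have hsq : 0 ≤ hankelForm γ 0 (q - p * q₀) (r - p * r₀) := by
      by_cases hz : (q - p * q₀, r - p * r₀) = 0
      · simp only [Prod.mk_eq_zero] at hz
        simp [hz, hankelForm_zero_zero_zero]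
      · exact (h _ _ hz).le
    have : 0 < (a - hankelMinMass γ) * p ^ 2 := by
      have := sub_pos.2 ha; positivity
    linarith

theorem exists_hankelPosDef_split (γ δ : ℕ → ℝ) (hδ : δ 0 = γ 0)
    (h : ∀ p q r q' r' : ℝ, (p, q, r, q', r') ≠ 0 →
      0 < hankelForm γ p q r + hankelForm δ p q' r' - γ 0 * p ^ 2) :
    ∃ a : ℝ, HankelPosDef (Function.update γ 0 a) ∧
      HankelPosDef (Function.update δ 0 (γ 0 - a)) := by
  have hγ : ∀ q r : ℝ, (q, r) ≠ 0 → 0 < hankelForm γ 0 q r := fun q r hqr => by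
    simpa [hankelForm_zero_zero_zero] using h 0 q r 0 0 (by simpa using hqr)
  have hδ' : ∀ q r : ℝ, (q, r) ≠ 0 → 0 < hankelForm δ 0 q r := fun q r hqr => by
    simpa [hankelForm_zero_zero_zero] using h 0 0 0 q r (by simpa using hqr)
  obtain ⟨q, r, hq⟩ := exists_hankelForm_eq_minMass_add (det_pos_of_hankelForm_zero_pos hγ).ne'
  obtain ⟨q', r', hq'⟩ :=
    exists_hankelForm_eq_minMass_add (det_pos_of_hankelForm_zero_pos hδ').ne'
  have hmass : hankelMinMass γ + hankelMinMass δ < γ 0 := by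
    have := h 1 q r q' r' (by simp)
    rw [hq 1 q r, hq' 1 q' r', hδ] at this
    simp only [one_mul, sub_self, hankelForm_zero_zero_zero] at this
    linarith
  refine ⟨(γ 0 + hankelMinMass γ - hankelMinMass δ) / 2,
    hankelPosDef_update_zero_of_minMass_lt hγ ?_, hankelPosDef_update_zero_of_minMass_lt hδ' ?_⟩ <;>
    linarith

end Hankel

theorem exists_cubic_root (c₁ c₀ : ℝ) : ∃ s : ℝ, s ^ 3 - c₁ * s - c₀ = 0 := by
  obtain ⟨R, hR0, hR⟩ : ∃ R : ℝ, 0 ≤ R ∧ |c₁| * R + |c₀| ≤ R ^ 3 :=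
    ⟨1 + |c₁| + |c₀|, by positivity, by
      have hx := abs_nonneg c₁
      have hy := abs_nonneg c₀
      nlinarith [mul_nonneg hx hy, mul_nonneg (mul_nonneg hx hy) hy, mul_nonneg hy hy,
        mul_nonneg (mul_nonneg hx hx) hy, mul_nonneg (mul_nonneg hy hy) hx]⟩
  have h₁ := mul_le_mul_of_nonneg_right (le_abs_self c₁) hR0
  have h₂ := mul_le_mul_of_nonneg_right (neg_abs_le c₁) hR0
  obtain ⟨s, -, hs⟩ := intermediate_value_Icc (by linarith : -R ≤ R)
    (f := fun x => x ^ 3 - c₁ * x - c₀) (by fun_prop) (show (0 : ℝ) ∈ Set.Icc _ _ from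
      ⟨by nlinarith [neg_abs_le c₀], by nlinarith [le_abs_self c₀]⟩)
  exact ⟨s, hs⟩

/-- `a, b, c` are the roots of a monic cubic `P` with `L(P) = L(t P) = 0`, where `L` is the
Riesz functional `t ^ n ↦ γ n`. -/
def IsQuadratureNodes (γ : ℕ → ℝ) (a b c : ℝ) : Prop :=
  γ 3 - (a + b + c) * γ 2 + (a * b + a * c + b * c) * γ 1 - a * b * c * γ 0 = 0 ∧
  γ 4 - (a + b + c) * γ 3 + (a * b + a * c + b * c) * γ 2 - a * b * c * γ 1 = 0

/-- `L` applied to the Lagrange basis polynomial `(t - b) (t - c) / ((a - b) (a - c))`. -/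
noncomputable def quadratureWeight (γ : ℕ → ℝ) (a b c : ℝ) : ℝ :=
  (γ 2 - (b + c) * γ 1 + b * c * γ 0) / ((a - b) * (a - c))

section Quadrature

variable {γ : ℕ → ℝ} {a b c : ℝ}

theorem IsQuadratureNodes.rotate (h : IsQuadratureNodes γ a b c) :
    IsQuadratureNodes γ b c a :=
  ⟨by linear_combination h.1, by linear_combination h.2⟩

theorem HankelPosDef.apply_zero_pos (hγ : HankelPosDef γ) : 0 < γ 0 := by
  simpa [hankelForm] using hγ 1 0 0 (by simp)

theorem HankelPosDef.det_pos (hγ : HankelPosDef γ) : 0 < γ 0 * γ 2 - γ 1 ^ 2 := by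
  have h := hγ (γ 1) (-γ 0) 0 (by simp [hγ.apply_zero_pos.ne'])
  simp only [hankelForm] at h
  nlinarith [hγ.apply_zero_pos]

/-- `L((t - b)² (t - c)²) = (a - b) (a - c) L((t - b) (t - c))`, since the difference is a
multiple of the cubic with roots `a, b, c` by a linear factor. -/
theorem HankelPosDef.mul_sub_mul_sub_pos (hγ : HankelPosDef γ) (h : IsQuadratureNodes γ a b c) :
    0 < (γ 2 - (b + c) * γ 1 + b * c * γ 0) * ((a - b) * (a - c)) := by
  have hpos := hγ (b * c) (-(b + c)) 1 (by simp)
  have key : (γ 2 - (b + c) * γ 1 + b * c * γ 0) * ((a - b) * (a - c)) =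
      hankelForm γ (b * c) (-(b + c)) 1 := by
    unfold hankelForm
    linear_combination (b + c - a) * h.1 - h.2
  exact key ▸ hpos

theorem HankelPosDef.quadratureWeight_pos (hγ : HankelPosDef γ) (h : IsQuadratureNodes γ a b c) :
    0 < quadratureWeight γ a b c :=
  div_pos_iff.2 (pos_and_pos_or_neg_and_neg_of_mul_pos (hγ.mul_sub_mul_sub_pos h))

theorem HankelPosDef.ne_of_isQuadratureNodes (hγ : HankelPosDef γ)
    (h : IsQuadratureNodes γ a b c) : a ≠ b := by
  rintro rfl
  simpa using hγ.mul_sub_mul_sub_pos h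

theorem HankelPosDef.exists_isQuadratureNodes (hγ : HankelPosDef γ) :
    ∃ a b c, IsQuadratureNodes γ a b c := by
  have hdet := hγ.det_pos.ne'
  -- `L` annihilates `P = t ^ 3 - c₁ t - c₀` and `t P`
  obtain ⟨c₀, c₁, h₃, h₄⟩ : ∃ c₀ c₁ : ℝ, c₀ * γ 0 + c₁ * γ 1 = γ 3 ∧ c₀ * γ 1 + c₁ * γ 2 = γ 4 := by
    refine ⟨(γ 3 * γ 2 - γ 4 * γ 1) / (γ 0 * γ 2 - γ 1 ^ 2),
      (γ 4 * γ 0 - γ 3 * γ 1) / (γ 0 * γ 2 - γ 1 ^ 2), ?_, ?_⟩ <;>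
    · rw [div_mul_eq_mul_div, div_mul_eq_mul_div, ← add_div, div_eq_iff hdet]; ring
  obtain ⟨s, hs⟩ := exists_cubic_root c₁ c₀
  -- otherwise `(t - s)² (t² + s t + s² - c₁)` would be a positive polynomial killed by `L`
  have hdisc : 0 ≤ 4 * c₁ - 3 * s ^ 2 := by
    by_contra! hneg
    have h₁ := hγ (-s ^ 2 / 2) (-s / 2) 1 (by simp)
    have h₂ := hγ (-s) 1 0 (by simp)
    have key : hankelForm γ (-s ^ 2 / 2) (-s / 2) 1 +
        -(4 * c₁ - 3 * s ^ 2) / 4 * hankelForm γ (-s) 1 0 = 0 := by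
      unfold hankelForm
      linear_combination s * h₃ - h₄ - (γ 1 - s * γ 0) * hs
    nlinarith [mul_pos (by linarith : 0 < -(4 * c₁ - 3 * s ^ 2) / 4) h₂]
  obtain ⟨b, c, hsum, hprod⟩ : ∃ b c : ℝ, b + c = -s ∧ b * c = s ^ 2 - c₁ :=
    ⟨(-s - √(4 * c₁ - 3 * s ^ 2)) / 2, (-s + √(4 * c₁ - 3 * s ^ 2)) / 2, by ring,
      by linear_combination -Real.sq_sqrt hdisc / 4⟩
  refine ⟨s, b, c, ?_, ?_⟩
  · linear_combination -h₃ + (s * γ 1 - γ 2) * hsum + (γ 1 - s * γ 0) * hprod - γ 0 * hs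
  · linear_combination -h₄ + (s * γ 2 - γ 3) * hsum + (γ 2 - s * γ 1) * hprod - γ 1 * hs

theorem IsQuadratureNodes.eq_sum (h : IsQuadratureNodes γ a b c) (hab : a ≠ b) (hac : a ≠ c)
    (hbc : b ≠ c) {n : ℕ} (hn : n ≤ 4) :
    γ n = quadratureWeight γ a b c * a ^ n + quadratureWeight γ b c a * b ^ n +
      quadratureWeight γ c a b * c ^ n := by
  have lagrange : ∀ m ≤ 2, γ m = quadratureWeight γ a b c * a ^ m +
      quadratureWeight γ b c a * b ^ m + quadratureWeight γ c a b * c ^ m := by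
    have := sub_ne_zero.2 hab
    have := sub_ne_zero.2 hac
    have := sub_ne_zero.2 hbc
    have := sub_ne_zero.2 hab.symm
    have := sub_ne_zero.2 hac.symm
    have := sub_ne_zero.2 hbc.symm
    intro m hm
    unfold quadratureWeight
    field_simp
    interval_cases m <;> ring
  have h₀ := lagrange 0 (by norm_num)
  have h₁ := lagrange 1 (by norm_num)
  have h₂ := lagrange 2 (by norm_num)
  have h₃ : γ 3 = quadratureWeight γ a b c * a ^ 3 + quadratureWeight γ b c a * b ^ 3 +
      quadratureWeight γ c a b * c ^ 3 := by
    linear_combination h.1 + (a + b + c) * h₂ - (a * b + a * c + b * c) * h₁ + a * b * c * h₀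
  interval_cases n
  · exact h₀
  · simpa using h₁
  · exact h₂
  · exact h₃
  · linear_combination h.2 + (a + b + c) * h₃ - (a * b + a * c + b * c) * h₂ + a * b * c * h₁

theorem HankelPosDef.exists_finsupp_moments (hγ : HankelPosDef γ) :
    ∃ μ : ℝ →₀ ℝ, 0 ≤ μ ∧ μ.support.card ≤ 3 ∧
      ∀ n ≤ 4, γ n = μ.sum fun t w => w * t ^ n := by
  obtain ⟨a, b, c, h⟩ := hγ.exists_isQuadratureNodes
  have hab := hγ.ne_of_isQuadratureNodes h
  have hbc := hγ.ne_of_isQuadratureNodes h.rotate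
  have hca := hγ.ne_of_isQuadratureNodes h.rotate.rotate
  have ha := hγ.quadratureWeight_pos h
  have hb := hγ.quadratureWeight_pos h.rotate
  have hc := hγ.quadratureWeight_pos h.rotate.rotate
  refine ⟨.single a (quadratureWeight γ a b c) + .single b (quadratureWeight γ b c a) +
    .single c (quadratureWeight γ c a b), ?_, ?_, fun n hn => ?_⟩
  · exact add_nonneg (add_nonneg (Finsupp.single_nonneg.2 ha.le) (Finsupp.single_nonneg.2 hb.le))
      (Finsupp.single_nonneg.2 hc.le)
  · refine (Finset.card_le_card (t := {a, b, c}) fun t ht => ?_).trans Finset.card_le_three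
    contrapose! ht
    simp only [Finset.mem_insert, Finset.mem_singleton, not_or] at ht
    simp [Ne.symm ht.1, Ne.symm ht.2.1, Ne.symm ht.2.2]
  · rw [Finsupp.sum_add_index' (by simp) (by intros; ring),
      Finsupp.sum_add_index' (by simp) (by intros; ring)]
    simp only [zero_mul, Finsupp.sum_single_index]
    exact h.eq_sum hab hca.symm hbc hn

end Quadrature

namespace MIdx

def one : MIdx 2 := ⟨(0, 0), by decide⟩
def x : MIdx 2 := ⟨(1, 0), by decide⟩
def y : MIdx 2 := ⟨(0, 1), by decide⟩
def xSq : MIdx 2 := ⟨(2, 0), by decide⟩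
def xy : MIdx 2 := ⟨(1, 1), by decide⟩
def ySq : MIdx 2 := ⟨(0, 2), by decide⟩

theorem sum_univ_two (f : MIdx 2 → ℝ) : ∑ z, f z = f one + f x + f y + f xSq + f xy + f ySq := by
  rw [show (Finset.univ : Finset (MIdx 2)) = {one, x, y, xSq, xy, ySq} by decide]
  rw [Finset.sum_insert (by decide), Finset.sum_insert (by decide), Finset.sum_insert (by decide),
    Finset.sum_insert (by decide), Finset.sum_insert (by decide), Finset.sum_singleton]
  ring

end MIdx

/-- The coefficient vector of the polynomial `p + q X + r X² + q' Y + r' Y²`. -/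
def axesVec (p q r q' r' : ℝ) (z : MIdx 2) : ℝ :=
  match (z.val.1 : ℕ), (z.val.2 : ℕ) with
  | 0, 0 => p
  | 1, 0 => q
  | 2, 0 => r
  | 0, 1 => q'
  | 0, 2 => r'
  | _, _ => 0

theorem axesVec_xy (p q r q' r' : ℝ) : axesVec p q r q' r' MIdx.xy = 0 := rfl

theorem axesVec_ne_zero {p q r q' r' : ℝ} (h : (p, q, r, q', r') ≠ 0) :
    axesVec p q r q' r' ≠ 0 := by
  contrapose! h
  simp only [Prod.mk_eq_zero]
  exact ⟨congrFun h MIdx.one, congrFun h MIdx.x, congrFun h MIdx.xSq, congrFun h MIdx.y,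
    congrFun h MIdx.ySq⟩

section MomentMatrix

variable {β : ℕ → ℕ → ℝ}

theorem momentMatrix_two_apply_xy (hmixed : ∀ i j, i + j ≤ 2 → β (i + 1) (j + 1) = 0)
    (z : MIdx 2) : momentMatrix 2 β z MIdx.xy = 0 :=
  hmixed _ _ z.2

theorem axesVec_dotProduct_momentMatrix_mulVec
    (hmixed : ∀ i j, i + j ≤ 2 → β (i + 1) (j + 1) = 0) (p q r q' r' : ℝ) :
    axesVec p q r q' r' ⬝ᵥ momentMatrix 2 β *ᵥ axesVec p q r q' r' =
      hankelForm (β · 0) p q r + hankelForm (β 0 ·) p q' r' - β 0 0 * p ^ 2 := by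
  simp only [dotProduct, mulVec, MIdx.sum_univ_two, axesVec, momentMatrix, hankelForm,
    MIdx.one, MIdx.x, MIdx.y, MIdx.xSq, MIdx.xy, MIdx.ySq, Fin.isValue, Fin.coe_ofNat_eq_mod,
    Nat.reduceAdd, Nat.zero_mod, Nat.one_mod, Nat.mod_succ, add_zero, zero_add, zero_le,
    Nat.one_le_ofNat, Std.le_refl, hmixed 0 0, hmixed 1 0, hmixed 0 1, hmixed 1 1, mul_zero,
    zero_mul]
  ring

end MomentMatrix

theorem Finsupp.sum_embDomain_sectL_add_embDomain_sectR (μ ν : ℝ →₀ ℝ) (i j : ℕ) :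
    (μ.embDomain (.sectL ℝ 0) + ν.embDomain (.sectR 0 ℝ)).sum
        (fun z w => w * z.1 ^ i * z.2 ^ j) =
      (μ.sum fun t w => w * t ^ i) * 0 ^ j + 0 ^ i * ν.sum fun t w => w * t ^ j := by
  rw [Finsupp.sum_add_index' (by simp) (by intros; ring), Finsupp.sum_embDomain,
    Finsupp.sum_embDomain, Finsupp.sum_mul, Finsupp.mul_sum]
  simp only [Function.Embedding.sectL_apply, Function.Embedding.sectR_apply]
  congr 1
  exact Finsupp.sum_congr fun _ _ => by ring

theorem exists_atomic_of_axes {μ ν : ℝ →₀ ℝ} (hμ : 0 ≤ μ) (hν : 0 ≤ ν)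
    (hμcard : μ.support.card ≤ 3) (hνcard : ν.support.card ≤ 3) :
    ∃ (S : Finset (ℝ × ℝ)) (ρ : ℝ × ℝ → ℝ), S.card ≤ 6 ∧ (∀ z ∈ S, 0 < ρ z) ∧
      ∀ i j : ℕ, ∑ z ∈ S, ρ z * z.1 ^ i * z.2 ^ j =
        (μ.sum fun t w => w * t ^ i) * 0 ^ j + 0 ^ i * ν.sum fun t w => w * t ^ j := by
  set ρ := μ.embDomain (.sectL ℝ 0) + ν.embDomain (.sectR 0 ℝ)
  have hρ : 0 ≤ ρ := add_nonneg (by simpa using Finsupp.embDomain_mono _ hμ)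
    (by simpa using Finsupp.embDomain_mono _ hν)
  refine ⟨ρ.support, ρ, ?_, fun z hz => (hρ z).lt_of_ne' (Finsupp.mem_support_iff.1 hz),
    Finsupp.sum_embDomain_sectL_add_embDomain_sectR μ ν⟩
  calc ρ.support.card
      ≤ (μ.embDomain (.sectL ℝ 0)).support.card + (ν.embDomain (.sectR 0 ℝ)).support.card :=
        (Finset.card_le_card Finsupp.support_add).trans (Finset.card_union_le _ _)
    _ ≤ 6 := by simp only [Finsupp.support_embDomain, Finset.card_map]; omega

theorem degenerate_hyperbola_case_has_atmost_six_atomic_measure_general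
    (β : ℕ → ℕ → ℝ)
    (hpsd : (momentMatrix 2 β).PosSemidef)
    (hrank : (momentMatrix 2 β).rank = 5)
    (hXY : β 1 1 = 0 ∧ β 2 1 = 0 ∧ β 1 2 = 0 ∧ β 3 1 = 0 ∧ β 2 2 = 0 ∧ β 1 3 = 0) :
    ∃ (S : Finset (ℝ × ℝ)) (ρ : ℝ × ℝ → ℝ),
      S.card ≤ 6 ∧
      (∀ z ∈ S, 0 < ρ z) ∧
      (∀ i j : ℕ, i + j ≤ 4 → β i j = ∑ z ∈ S, ρ z * z.1 ^ i * z.2 ^ j) := by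
  have hmixed : ∀ i j, i + j ≤ 2 → β (i + 1) (j + 1) = 0 := by
    obtain ⟨h₁₁, h₂₁, h₁₂, h₃₁, h₂₂, h₁₃⟩ := hXY
    intro i j hij
    have hi : i ≤ 2 := by omega
    have hj : j ≤ 2 := by omega
    interval_cases i <;> interval_cases j <;> first | assumption | omega
  obtain ⟨a, hx, hy⟩ := exists_hankelPosDef_split (β · 0) (β 0 ·) rfl fun p q r q' r' h => by
    rw [← axesVec_dotProduct_momentMatrix_mulVec hmixed]
    simpa using hpsd.dotProduct_mulVec_pos_of_rank_add_one (by rw [hrank]; rfl)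
      (momentMatrix_two_apply_xy hmixed) (axesVec_ne_zero h) (axesVec_xy p q r q' r')
  obtain ⟨μ, hμ, hμcard, hμβ⟩ := hx.exists_finsupp_moments
  obtain ⟨ν, hν, hνcard, hνβ⟩ := hy.exists_finsupp_moments
  obtain ⟨S, ρ, hS, hρ, hρβ⟩ := exists_atomic_of_axes hμ hν hμcard hνcard
  refine ⟨S, ρ, hS, hρ, fun i j hij => ?_⟩
  rw [hρβ, ← hμβ i (by omega), ← hνβ j (by omega)]
  rcases i with _ | i <;> rcases j with _ | j
  · simp
  · simp
  · simp
  · simpa using hmixed i j (by omega)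

/-- Proposition 5.5 of [CuFi6], real form. If the moment matrix `M(2)`
of `β^(4)` is positive semidefinite of rank 5 and the column labeled `XY` is zero
(equivalently `β₁₁ = β₂₁ = β₁₂ = β₃₁ = β₂₂ = β₁₃ = 0`), then `β^(4)` admits a
representing measure whose support has cardinality at most 6, i.e. a finitely atomic
representing measure, with positive weights on a set of at most 6 distinct points. -/
theorem degenerate_hyperbola_case_has_atmost_six_atomic_measure
    (β : ℕ → ℕ → ℝ) (hβ00 : 0 < β 0 0)
    (hpsd : (momentMatrix 2 β).PosSemidef)
    (hrank : (momentMatrix 2 β).rank = 5)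
    (hXY : β 1 1 = 0 ∧ β 2 1 = 0 ∧ β 1 2 = 0 ∧ β 3 1 = 0 ∧ β 2 2 = 0 ∧ β 1 3 = 0) :
    ∃ (S : Finset (ℝ × ℝ)) (ρ : ℝ × ℝ → ℝ),
      S.card ≤ 6 ∧
      (∀ z ∈ S, 0 < ρ z) ∧
      (∀ i j : ℕ, i + j ≤ 4 → β i j = ∑ z ∈ S, ρ z * z.1 ^ i * z.2 ^ j) :=
  degenerate_hyperbola_case_has_atmost_six_atomic_measure_general β hpsd hrank hXY
end

section
/- Let n ≥ 1, let β^(2n) = (β_{ij})_{0≤i+j≤2n} be a real sequence, let Ψ(x,y) = (a+bx+cy, d+ex+fy) with a,b,c,d,e,f ∈ ℝ and bf − ce ≠ 0, and let β̃^(2n) be the transformed sequence β̃_{ij} := L_β(Ψ₁^i Ψ₂^j). Let J be the linear map on the space of coefficient vectors of polynomials of degree ≤ n defined by J p̂ = (p∘Ψ)^. Then J is invertible and the moment matrices satisfy M̃(n) = Jᵀ M(n) J. -/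
open MvPolynomial Matrix

/-- The Riesz functional of a sequence `β`: `L_β(Σ p_{ij} x^i y^j) = Σ p_{ij} β_{ij}`. -/
noncomputable def riesz (β : ℕ → ℕ → ℝ) (p : MvPolynomial (Fin 2) ℝ) : ℝ :=
  ∑ m ∈ p.support, p.coeff m * β (m 0) (m 1)

/-- The sequence transformed by the degree-one map
`Ψ(x,y) = (a + bx + cy, d + ex + fy)`:  `β̃_{ij} := L_β(Ψ₁^i Ψ₂^j)`. -/
noncomputable def transSeq (β : ℕ → ℕ → ℝ) (a b c d e f : ℝ) (i j : ℕ) : ℝ :=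
  riesz β ((C a + C b * X 0 + C c * X 1) ^ i * (C d + C e * X 0 + C f * X 1) ^ j)

/-- The coefficient vector `p̂` (truncated at degree `n`) of a bivariate polynomial. -/
noncomputable def polyVec (n : ℕ) (p : MvPolynomial (Fin 2) ℝ) : MIdx n → ℝ :=
  fun ij => MvPolynomial.coeff
    (Finsupp.single (0 : Fin 2) (ij.val.1 : ℕ) + Finsupp.single (1 : Fin 2) (ij.val.2 : ℕ)) p

/-- Composition `p ∘ Ψ` of a bivariate polynomial with the degree-one map
`Ψ(x,y) = (a + bx + cy, d + ex + fy)`. -/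
noncomputable def psiComp (a b c d e f : ℝ) (p : MvPolynomial (Fin 2) ℝ) :
    MvPolynomial (Fin 2) ℝ :=
  MvPolynomial.bind₁ ![C a + C b * X 0 + C c * X 1, C d + C e * X 0 + C f * X 1] p


/-!
Composing with `Ψ` is a ring endomorphism of `ℝ[x, y]` that does not raise degrees, so the
columns of `J` are the coefficient vectors of `Ψ₁^i Ψ₂^j`. For `deg p, deg q ≤ n` one has
`L_β(p q) = p̂ᵀ M(n) q̂`, hence
`(Jᵀ M(n) J)_{(i,j),(k,l)} = L_β(Ψ₁^(i+k) Ψ₂^(j+l)) = β̃_{i+k, j+l}`.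
Since `bf - ce ≠ 0`, `Ψ` has an affine inverse, and composing with it yields a right inverse
of `J` on polynomials of degree `≤ n`.
-/

namespace MIdx

variable {n : ℕ}

noncomputable def exponent (r : MIdx n) : Fin 2 →₀ ℕ :=
  Finsupp.single 0 (r.1.1 : ℕ) + Finsupp.single 1 (r.1.2 : ℕ)

@[simp]
lemma exponent_apply_zero (r : MIdx n) : r.exponent 0 = r.1.1 := by
  simp [exponent]

@[simp]
lemma exponent_apply_one (r : MIdx n) : r.exponent 1 = r.1.2 := by
  simp [exponent]

lemma exponent_sum (r : MIdx n) : (r.exponent.sum fun _ e => e) = r.1.1 + r.1.2 := by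
  simp [Finsupp.sum_fintype]

lemma exponent_injective : Function.Injective (exponent (n := n)) := fun r s h => by
  have h0 := DFunLike.congr_fun h 0
  have h1 := DFunLike.congr_fun h 1
  simp only [exponent_apply_zero, exponent_apply_one] at h0 h1
  exact Subtype.ext (Prod.ext (Fin.val_injective h0) (Fin.val_injective h1))

lemma exists_exponent_eq {u : Fin 2 →₀ ℕ} (hu : (u.sum fun _ e => e) ≤ n) :
    ∃ r : MIdx n, r.exponent = u := by
  rw [Finsupp.sum_fintype _ _ (by simp), Fin.sum_univ_two] at hu
  refine ⟨⟨(⟨u 0, by omega⟩, ⟨u 1, by omega⟩), hu⟩, ?_⟩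
  ext i
  fin_cases i <;> simp

end MIdx

section CoefficientVector

variable {n : ℕ}

lemma polyVec_apply (p : MvPolynomial (Fin 2) ℝ) (r : MIdx n) :
    polyVec n p r = p.coeff r.exponent := rfl

lemma polyVec_sum {ι : Type*} (s : Finset ι) (p : ι → MvPolynomial (Fin 2) ℝ) :
    polyVec n (∑ i ∈ s, p i) = ∑ i ∈ s, polyVec n (p i) := by
  ext r
  simp [polyVec_apply, coeff_sum]

lemma polyVec_monomial (r : MIdx n) (c : ℝ) :
    polyVec n (monomial r.exponent c) = Pi.single r c := by
  classical
  ext s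
  rw [polyVec_apply, coeff_monomial, Pi.single_apply]
  exact if_congr (MIdx.exponent_injective.eq_iff.trans eq_comm) rfl rfl

lemma totalDegree_monomial_exponent_le (r : MIdx n) (c : ℝ) :
    (monomial r.exponent c).totalDegree ≤ n :=
  (totalDegree_monomial_le _ _).trans (r.exponent_sum.trans_le r.2)

lemma sum_monomial_polyVec {p : MvPolynomial (Fin 2) ℝ} (hp : p.totalDegree ≤ n) :
    ∑ r : MIdx n, monomial r.exponent (polyVec n p r) = p := by
  classical
  have hsupp : p.support ⊆ Finset.univ.image (MIdx.exponent (n := n)) := fun u hu => by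
    obtain ⟨r, hr⟩ := MIdx.exists_exponent_eq ((le_totalDegree hu).trans hp)
    exact Finset.mem_image.2 ⟨r, Finset.mem_univ _, hr⟩
  change ∑ r : MIdx n, monomial r.exponent (p.coeff r.exponent) = p
  rw [← Finset.sum_image (f := fun u => monomial u (p.coeff u))
    (MIdx.exponent_injective.injOn), ← Finset.sum_subset hsupp, ← p.as_sum]
  intro u _ hu
  rw [notMem_support_iff.1 hu, map_zero]

lemma exists_polyVec_eq (v : MIdx n → ℝ) :
    ∃ p : MvPolynomial (Fin 2) ℝ, p.totalDegree ≤ n ∧ polyVec n p = v := by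
  refine ⟨∑ r, monomial r.exponent (v r), ?_, ?_⟩
  · exact totalDegree_finsetSum_le fun r _ => totalDegree_monomial_exponent_le r _
  simp only [polyVec_sum, polyVec_monomial]
  exact Finset.univ_sum_single v

end CoefficientVector

section Riesz

variable (β : ℕ → ℕ → ℝ)

noncomputable def rieszLinearMap : MvPolynomial (Fin 2) ℝ →ₗ[ℝ] ℝ :=
  Finsupp.linearCombination ℝ (fun m : Fin 2 →₀ ℕ => β (m 0) (m 1)) ∘ₗ
    (AddMonoidAlgebra.coeffLinearEquiv ℝ).toLinearMap

lemma rieszLinearMap_apply (p : MvPolynomial (Fin 2) ℝ) : rieszLinearMap β p = riesz β p := rfl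

lemma riesz_monomial (u : Fin 2 →₀ ℕ) (c : ℝ) :
    riesz β (monomial u c) = c * β (u 0) (u 1) := by
  rw [← rieszLinearMap_apply]
  exact Finsupp.linearCombination_single ℝ c u

lemma riesz_mul_eq_dotProduct {n : ℕ} {p q : MvPolynomial (Fin 2) ℝ} (hp : p.totalDegree ≤ n)
    (hq : q.totalDegree ≤ n) :
    riesz β (p * q) = polyVec n p ⬝ᵥ (momentMatrix n β *ᵥ polyVec n q) := by
  have hpq : p * q = ∑ r : MIdx n, ∑ s : MIdx n,
      monomial (r.exponent + s.exponent) (polyVec n p r * polyVec n q s) := by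
    conv_lhs => rw [← sum_monomial_polyVec hp, ← sum_monomial_polyVec hq]
    simp only [Finset.sum_mul_sum, monomial_mul]
  rw [hpq, ← rieszLinearMap_apply]
  simp only [map_sum, rieszLinearMap_apply, riesz_monomial, dotProduct, mulVec, Finset.mul_sum]
  refine Finset.sum_congr rfl fun r _ => Finset.sum_congr rfl fun s _ => ?_
  simp only [momentMatrix, Finsupp.add_apply, MIdx.exponent_apply_zero, MIdx.exponent_apply_one]
  ring

end Riesz

lemma totalDegree_bind₁_le {σ τ R : Type*} [CommSemiring R] {f : σ → MvPolynomial τ R}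
    (hf : ∀ i, (f i).totalDegree ≤ 1) (p : MvPolynomial σ R) :
    (bind₁ f p).totalDegree ≤ p.totalDegree := by
  conv_lhs => rw [p.as_sum, map_sum]
  refine totalDegree_finsetSum_le fun u hu => ?_
  rw [bind₁_monomial]
  calc (C (p.coeff u) * ∏ i ∈ u.support, f i ^ u i).totalDegree
      ≤ ∑ i ∈ u.support, (f i ^ u i).totalDegree := by
        refine (totalDegree_mul _ _).trans ?_
        rw [totalDegree_C, zero_add]
        exact totalDegree_finsetProd _ _
    _ ≤ ∑ i ∈ u.support, u i := Finset.sum_le_sum fun i _ =>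
        (totalDegree_pow _ _).trans (by simpa using Nat.mul_le_mul_left (u i) (hf i))
    _ ≤ p.totalDegree := le_totalDegree hu

lemma totalDegree_C_add_C_mul_X_add_C_mul_X_le {σ R : Type*} [CommSemiring R] (a b c : R)
    (i j : σ) : (C a + C b * X i + C c * X j : MvPolynomial σ R).totalDegree ≤ 1 := by
  have hX (r : R) (k : σ) : (C r * X k : MvPolynomial σ R).totalDegree ≤ 1 := by
    rw [C_mul_X_eq_monomial]
    exact (totalDegree_monomial_le _ _).trans (by simp)
  refine (totalDegree_add _ _).trans (max_le ((totalDegree_add _ _).trans (max_le ?_ (hX b i)))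
    (hX c j))
  simp

section DegreeOneTransformation

variable (a b c d e f : ℝ)

lemma totalDegree_psiComp_le (p : MvPolynomial (Fin 2) ℝ) :
    (psiComp a b c d e f p).totalDegree ≤ p.totalDegree := by
  refine totalDegree_bind₁_le (fun i => ?_) p
  fin_cases i <;> exact totalDegree_C_add_C_mul_X_add_C_mul_X_le _ _ _ _ _

lemma psiComp_mul (p q : MvPolynomial (Fin 2) ℝ) :
    psiComp a b c d e f (p * q) = psiComp a b c d e f p * psiComp a b c d e f q :=
  map_mul _ p q

lemma psiComp_psiComp (a' b' c' d' e' f' : ℝ) (p : MvPolynomial (Fin 2) ℝ) :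
    psiComp a b c d e f (psiComp a' b' c' d' e' f' p) =
      psiComp (a' + b' * a + c' * d) (b' * b + c' * e) (b' * c + c' * f)
        (d' + e' * a + f' * d) (e' * b + f' * e) (e' * c + f' * f) p := by
  rw [psiComp, psiComp, psiComp, bind₁_bind₁]
  refine congrArg (bind₁ · p) (funext fun i => ?_)
  fin_cases i <;> simp [C_add, C_mul] <;> ring

lemma psiComp_id (p : MvPolynomial (Fin 2) ℝ) : psiComp 0 1 0 0 0 1 p = p := by
  have hX : ![(C 0 + C 1 * X 0 + C 0 * X 1 : MvPolynomial (Fin 2) ℝ),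
      C 0 + C 0 * X 0 + C 1 * X 1] = X := by
    funext i
    fin_cases i <;> simp
  rw [psiComp, hX, bind₁_X_left, AlgHom.id_apply]

lemma transSeq_eq_riesz_psiComp (β : ℕ → ℕ → ℝ) (u : Fin 2 →₀ ℕ) :
    transSeq β a b c d e f (u 0) (u 1) = riesz β (psiComp a b c d e f (monomial u 1)) := by
  simp [transSeq, psiComp, monomial_eq, Finsupp.prod_fintype, Fin.prod_univ_two]

end DegreeOneTransformation

lemma exists_psiComp_eq {a b c d e f : ℝ} (hdet : b * f - c * e ≠ 0)
    (p : MvPolynomial (Fin 2) ℝ) :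
    ∃ q, q.totalDegree ≤ p.totalDegree ∧ psiComp a b c d e f q = p := by
  set D := b * f - c * e
  -- `q = p ∘ Ψ⁻¹`, where `Ψ⁻¹` has linear part `D⁻¹ [[f, -c], [-e, b]]`
  refine ⟨psiComp ((c * d - a * f) / D) (f / D) (-c / D) ((a * e - b * d) / D) (-e / D) (b / D) p,
    totalDegree_psiComp_le .., ?_⟩
  rw [psiComp_psiComp]
  convert psiComp_id p using 2 <;> field_simp <;> ring

theorem momentMatrix_transform_eq_conjugation_general
    (n : ℕ) (β : ℕ → ℕ → ℝ) (a b c d e f : ℝ)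
    (hdet : b * f - c * e ≠ 0)
    (J : Matrix (MIdx n) (MIdx n) ℝ)
    (hJ : ∀ p : MvPolynomial (Fin 2) ℝ, p.totalDegree ≤ n →
      J.mulVec (polyVec n p) = polyVec n (psiComp a b c d e f p)) :
    IsUnit J ∧
    momentMatrix n (transSeq β a b c d e f) = Jᵀ * momentMatrix n β * J := by
  classical
  have hdeg (r : MIdx n) : (psiComp a b c d e f (monomial r.exponent 1)).totalDegree ≤ n :=
    (totalDegree_psiComp_le ..).trans (totalDegree_monomial_exponent_le r 1)
  have hcol (r : MIdx n) : Jᵀ r = polyVec n (psiComp a b c d e f (monomial r.exponent 1)) := by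
    rw [← hJ _ (totalDegree_monomial_exponent_le r 1), polyVec_monomial, mulVec_single_one]
    rfl
  refine ⟨mulVec_surjective_iff_isUnit.1 fun v => ?_, ?_⟩
  · obtain ⟨p, hp, rfl⟩ := exists_polyVec_eq v
    obtain ⟨q, hq, rfl⟩ := exists_psiComp_eq (a := a) (d := d) hdet p
    exact ⟨polyVec n q, hJ q (hq.trans hp)⟩
  · ext r s
    rw [mul_mul_apply, hcol, hcol, ← riesz_mul_eq_dotProduct β (hdeg r) (hdeg s),
      ← psiComp_mul, monomial_mul, one_mul, ← transSeq_eq_riesz_psiComp]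
    simp [momentMatrix]

/-- Invariance under degree-one transformations, parts (1)–(2).
If `J` is the matrix acting on coefficient vectors of polynomials of degree ≤ n by
`J p̂ = (p ∘ Ψ)^`, then `J` is invertible and `M̃(n) = Jᵀ M(n) J`. -/
theorem momentMatrix_transform_eq_conjugation
    (n : ℕ) (hn : 1 ≤ n) (β : ℕ → ℕ → ℝ) (a b c d e f : ℝ)
    (hdet : b * f - c * e ≠ 0)
    (J : Matrix (MIdx n) (MIdx n) ℝ)
    (hJ : ∀ p : MvPolynomial (Fin 2) ℝ, p.totalDegree ≤ n →
      J.mulVec (polyVec n p) = polyVec n (psiComp a b c d e f p)) :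
    IsUnit J ∧
    momentMatrix n (transSeq β a b c d e f) = Jᵀ * momentMatrix n β * J :=
  momentMatrix_transform_eq_conjugation_general n β a b c d e f hdet J hJ
end

section
/- Let n ≥ 1, let β^(2n) = (β_{ij})_{0≤i+j≤2n} be a real sequence, let Ψ(x,y) = (a+bx+cy, d+ex+fy) with bf − ce ≠ 0, and let β̃^(2n) be the transformed sequence β̃_{ij} := L_β(Ψ₁^i Ψ₂^j). Then rank M̃(n) = rank M(n). -/
open MvPolynomial

namespace MomAux

variable {n : ℕ}

/-- The exponent finsupp associated to an index. -/
noncomputable def mon (p : MIdx n) : Fin 2 →₀ ℕ :=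
  Finsupp.single 0 (p.val.1 : ℕ) + Finsupp.single 1 (p.val.2 : ℕ)

@[simp] lemma mon_zero (p : MIdx n) : mon p 0 = (p.val.1 : ℕ) := by
  simp [mon, Finsupp.single_apply]

@[simp] lemma mon_one (p : MIdx n) : mon p 1 = (p.val.2 : ℕ) := by
  simp [mon, Finsupp.single_apply]

lemma mon_injective : Function.Injective (mon (n := n)) := by
  intro p q h
  have h0 : mon p 0 = mon q 0 := by rw [h]
  have h1 : mon p 1 = mon q 1 := by rw [h]
  simp only [mon_zero, mon_one] at h0 h1
  apply Subtype.ext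
  apply Prod.ext <;> exact Fin.ext (by assumption)

lemma deg_le {P : MvPolynomial (Fin 2) ℝ} (hP : P.totalDegree ≤ n)
    {m : Fin 2 →₀ ℕ} (hm : m ∈ P.support) : (m 0 : ℕ) + m 1 ≤ n := by
  have h := (MvPolynomial.le_totalDegree hm).trans hP
  rwa [Finsupp.sum_fintype _ _ (fun _ => rfl), Fin.sum_univ_two] at h

/-- Build an index from a finsupp of bounded degree. -/
def toIdx (m : Fin 2 →₀ ℕ) (h : (m 0 : ℕ) + m 1 ≤ n) : MIdx n :=
  ⟨(⟨m 0, by omega⟩, ⟨m 1, by omega⟩), h⟩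

lemma mon_toIdx (m : Fin 2 →₀ ℕ) (h : (m 0 : ℕ) + m 1 ≤ n) :
    mon (toIdx m h) = m := by
  ext k
  fin_cases k <;> simp [toIdx]

lemma sum_support_eq {M : Type*} [AddCommMonoid M] {P : MvPolynomial (Fin 2) ℝ}
    (hP : P.totalDegree ≤ n) (g : (Fin 2 →₀ ℕ) → M)
    (hg : ∀ m, m ∉ P.support → g m = 0) :
    ∑ m ∈ P.support, g m = ∑ p : MIdx n, g (mon p) := by
  rw [show (∑ p : MIdx n, g (mon p)) = ∑ m ∈ Finset.univ.image (mon (n := n)), g m from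
    (Finset.sum_image (fun x _ y _ h => mon_injective h)).symm]
  refine Finset.sum_subset ?_ (fun m _ hm => hg m hm)
  intro m hm
  exact Finset.mem_image.mpr ⟨toIdx m (deg_le hP hm), Finset.mem_univ _, mon_toIdx _ _⟩

variable {β : ℕ → ℕ → ℝ}

lemma riesz_eq_sum_subset {P : MvPolynomial (Fin 2) ℝ} {S : Finset (Fin 2 →₀ ℕ)}
    (h : P.support ⊆ S) :
    riesz β P = ∑ m ∈ S, P.coeff m * β (m 0) (m 1) := by
  refine Finset.sum_subset h (fun m _ hm => ?_)
  rw [MvPolynomial.notMem_support_iff.mp hm, zero_mul]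

@[simp] lemma riesz_zero : riesz β 0 = 0 := by simp [riesz]

lemma riesz_add (P Q : MvPolynomial (Fin 2) ℝ) :
    riesz β (P + Q) = riesz β P + riesz β Q := by
  rw [riesz_eq_sum_subset (S := P.support ∪ Q.support)
      (MvPolynomial.support_add),
    riesz_eq_sum_subset (S := P.support ∪ Q.support) Finset.subset_union_left,
    riesz_eq_sum_subset (S := P.support ∪ Q.support) Finset.subset_union_right,
    ← Finset.sum_add_distrib]
  refine Finset.sum_congr rfl (fun m _ => ?_)
  rw [MvPolynomial.coeff_add, add_mul]

lemma riesz_sum {ι : Type*} (s : Finset ι) (f : ι → MvPolynomial (Fin 2) ℝ) :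
    riesz β (∑ i ∈ s, f i) = ∑ i ∈ s, riesz β (f i) := by
  classical
  induction s using Finset.cons_induction with
  | empty => simp
  | cons i s hi ih => rw [Finset.sum_cons, Finset.sum_cons, riesz_add, ih]

lemma riesz_monomial (m : Fin 2 →₀ ℕ) (c : ℝ) :
    riesz β (monomial m c) = c * β (m 0) (m 1) := by
  by_cases hc : c = 0
  · simp [hc]
  · simp [riesz, MvPolynomial.support_monomial, hc, MvPolynomial.coeff_monomial]

lemma deg_affine (x y z : ℝ) :
    (C x + C y * X 0 + C z * X 1 : MvPolynomial (Fin 2) ℝ).totalDegree ≤ 1 := by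
  refine (totalDegree_add _ _).trans (max_le ((totalDegree_add _ _).trans (max_le ?_ ?_)) ?_)
  · simp [totalDegree_C]
  · exact (totalDegree_mul _ _).trans (by simp [totalDegree_C, totalDegree_X])
  · exact (totalDegree_mul _ _).trans (by simp [totalDegree_C, totalDegree_X])

lemma deg_pow_mul {u v : MvPolynomial (Fin 2) ℝ} (hu : u.totalDegree ≤ 1)
    (hv : v.totalDegree ≤ 1) {i j : ℕ} (hij : i + j ≤ n) :
    (u ^ i * v ^ j).totalDegree ≤ n := by
  refine (totalDegree_mul _ _).trans ?_
  have h1 := (totalDegree_pow u i).trans (Nat.mul_le_mul_left i hu)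
  have h2 := (totalDegree_pow v j).trans (Nat.mul_le_mul_left j hv)
  omega

lemma poly_as_sum {P : MvPolynomial (Fin 2) ℝ} (hP : P.totalDegree ≤ n) :
    P = ∑ p : MIdx n, monomial (mon p) (P.coeff (mon p)) := by
  conv_lhs => rw [P.as_sum]
  exact sum_support_eq hP (fun m => monomial m (P.coeff m)) (fun m hm => by
    simp [MvPolynomial.notMem_support_iff.mp hm])

lemma riesz_mul {P Q : MvPolynomial (Fin 2) ℝ}
    (hP : P.totalDegree ≤ n) (hQ : Q.totalDegree ≤ n) :
    riesz β (P * Q) = ∑ p : MIdx n, ∑ q : MIdx n,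
      P.coeff (mon p) * Q.coeff (mon q) *
        β ((p.val.1 : ℕ) + (q.val.1 : ℕ)) ((p.val.2 : ℕ) + (q.val.2 : ℕ)) := by
  conv_lhs => rw [poly_as_sum hP, poly_as_sum hQ]
  rw [Finset.sum_mul_sum]
  rw [riesz_sum]
  refine Finset.sum_congr rfl (fun p _ => ?_)
  rw [riesz_sum]
  refine Finset.sum_congr rfl (fun q _ => ?_)
  rw [MvPolynomial.monomial_mul, riesz_monomial]
  simp [Finsupp.add_apply]

/-- The coefficient matrix of the family `u^i v^j`. -/
noncomputable def Jmat (n : ℕ) (u v : MvPolynomial (Fin 2) ℝ) :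
    Matrix (MIdx n) (MIdx n) ℝ :=
  fun α p => (u ^ (p.val.1 : ℕ) * v ^ (p.val.2 : ℕ)).coeff (mon α)

lemma Jmat_mul {u v u' v' : MvPolynomial (Fin 2) ℝ}
    (hu' : u'.totalDegree ≤ 1) (hv' : v'.totalDegree ≤ 1) (α p : MIdx n) :
    (Jmat n u v * Jmat n u' v') α p
      = ((aeval ![u, v] u') ^ (p.val.1 : ℕ) *
          (aeval ![u, v] v') ^ (p.val.2 : ℕ)).coeff (mon α) := by
  rw [Matrix.mul_apply]
  have hQ : (u' ^ (p.val.1 : ℕ) * v' ^ (p.val.2 : ℕ)).totalDegree ≤ n :=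
    deg_pow_mul hu' hv' p.2
  rw [← map_pow, ← map_pow, ← map_mul]
  conv_rhs => rw [poly_as_sum hQ]
  rw [map_sum, MvPolynomial.coeff_sum]
  refine Finset.sum_congr rfl (fun q _ => ?_)
  rw [aeval_monomial]
  rw [Finsupp.prod_fintype _ _ (fun _ => pow_zero _), Fin.prod_univ_two]
  simp only [Matrix.cons_val_zero, Matrix.cons_val_one, Matrix.head_cons, mon_zero, mon_one]
  rw [show (algebraMap ℝ (MvPolynomial (Fin 2) ℝ)) ((u' ^ (p.val.1:ℕ) * v' ^ (p.val.2:ℕ)).coeff (mon q)) = C ((u' ^ (p.val.1:ℕ) * v' ^ (p.val.2:ℕ)).coeff (mon q)) from rfl,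
     MvPolynomial.coeff_C_mul]
  rw [Jmat, Jmat]
  ring

lemma Jmat_X_eq_one : (fun α p : MIdx n => ((X 0 : MvPolynomial (Fin 2) ℝ) ^ (p.val.1 : ℕ) * (X 1) ^ (p.val.2 : ℕ)).coeff (mon α)) = (1 : Matrix (MIdx n) (MIdx n) ℝ) := by
  funext α p
  rw [MvPolynomial.X_pow_eq_monomial, MvPolynomial.X_pow_eq_monomial,
    MvPolynomial.monomial_mul, one_mul, MvPolynomial.coeff_monomial,
    Matrix.one_apply]
  have : Finsupp.single (0 : Fin 2) (p.val.1 : ℕ) + Finsupp.single 1 (p.val.2 : ℕ) = mon p := rfl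
  rw [this]
  by_cases h : α = p
  · simp [h]
  · rw [if_neg (fun hc => h (mon_injective hc.symm)), if_neg h]

end MomAux

open Matrix in
/-- Invariance under degree-one transformations, part (4).
`rank M̃(n) = rank M(n)`. -/
theorem momentMatrix_transform_rank_eq
    (n : ℕ) (hn : 1 ≤ n) (β : ℕ → ℕ → ℝ) (a b c d e f : ℝ)
    (hdet : b * f - c * e ≠ 0) :
    (momentMatrix n (transSeq β a b c d e f)).rank = (momentMatrix n β).rank := by
  classical
  set Ψ1 : MvPolynomial (Fin 2) ℝ := C a + C b * X 0 + C c * X 1 with hΨ1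
  set Ψ2 : MvPolynomial (Fin 2) ℝ := C d + C e * X 0 + C f * X 1 with hΨ2
  have hd1 : Ψ1.totalDegree ≤ 1 := MomAux.deg_affine a b c
  have hd2 : Ψ2.totalDegree ≤ 1 := MomAux.deg_affine d e f
  set J : Matrix (MIdx n) (MIdx n) ℝ := MomAux.Jmat n Ψ1 Ψ2 with hJ
  -- Claim A : M̃ = Jᵀ * M * J
  have claimA : momentMatrix n (transSeq β a b c d e f)
      = Jᵀ * momentMatrix n β * J := by
    ext p q
    have hlhs : momentMatrix n (transSeq β a b c d e f) p q
        = riesz β ((Ψ1 ^ (p.val.1:ℕ) * Ψ2 ^ (p.val.2:ℕ)) *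
            (Ψ1 ^ (q.val.1:ℕ) * Ψ2 ^ (q.val.2:ℕ))) := by
      simp only [momentMatrix, transSeq, ← hΨ1, ← hΨ2]
      congr 1
      rw [pow_add, pow_add]
      ring
    have hrhs : (Jᵀ * momentMatrix n β * J) p q
        = ∑ α : MIdx n, ∑ γ : MIdx n, J α p * momentMatrix n β α γ * J γ q := by
      rw [Matrix.mul_apply]
      simp only [Matrix.mul_apply, Matrix.transpose_apply, Finset.sum_mul]
      rw [Finset.sum_comm]
    rw [hlhs, MomAux.riesz_mul (MomAux.deg_pow_mul hd1 hd2 p.2)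
      (MomAux.deg_pow_mul hd1 hd2 q.2), hrhs]
    refine Finset.sum_congr rfl (fun α _ => ?_)
    refine Finset.sum_congr rfl (fun γ _ => ?_)
    simp only [hJ, MomAux.Jmat, momentMatrix]
    ring
  -- Claim B : J is invertible
  set D := b * f - c * e with hD
  set u' : MvPolynomial (Fin 2) ℝ :=
    C (-(f/D*a + (-(c/D))*d)) + C (f/D) * X 0 + C (-(c/D)) * X 1 with hu'
  set v' : MvPolynomial (Fin 2) ℝ :=
    C (-((-(e/D))*a + (b/D)*d)) + C (-(e/D)) * X 0 + C (b/D) * X 1 with hv'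
  have haffine : ∀ x y z : ℝ,
      aeval ![Ψ1, Ψ2] (C x + C y * X 0 + C z * X 1 : MvPolynomial (Fin 2) ℝ)
        = C (x + y*a + z*d) + C (y*b + z*e) * X 0 + C (y*c + z*f) * X 1 := by
    intro x y z
    simp only [map_add, _root_.map_mul, aeval_C, aeval_X, Matrix.cons_val_zero,
      Matrix.cons_val_one, Matrix.head_cons, hΨ1, hΨ2,
      algebraMap_eq]
    ring
  have hau' : aeval ![Ψ1, Ψ2] u' = X 0 := by
    rw [hu', haffine]
    have e1 : (-(f/D*a + (-(c/D))*d)) + (f/D)*a + (-(c/D))*d = 0 := by ring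
    have e2 : (f/D)*b + (-(c/D))*e = 1 := by field_simp [hD]; ring
    have e3 : (f/D)*c + (-(c/D))*f = 0 := by ring
    rw [e1, e2, e3]
    simp
  have hav' : aeval ![Ψ1, Ψ2] v' = X 1 := by
    rw [hv', haffine]
    have e1 : (-((-(e/D))*a + (b/D)*d)) + (-(e/D))*a + (b/D)*d = 0 := by ring
    have e2 : (-(e/D))*b + (b/D)*e = 0 := by ring
    have e3 : (-(e/D))*c + (b/D)*f = 1 := by field_simp [hD]; ring
    rw [e1, e2, e3]
    simp
  have hinv : J * MomAux.Jmat n u' v' = 1 := by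
    funext α p
    rw [hJ, MomAux.Jmat_mul (MomAux.deg_affine _ _ _) (MomAux.deg_affine _ _ _),
      hau', hav']
    exact congrFun (congrFun MomAux.Jmat_X_eq_one α) p
  have hJdet : IsUnit J.det := Matrix.isUnit_det_of_right_inverse hinv
  have hJtdet : IsUnit Jᵀ.det := by rwa [Matrix.det_transpose]
  rw [claimA, Matrix.rank_mul_eq_left_of_isUnit_det J _ hJdet,
    Matrix.rank_mul_eq_right_of_isUnit_det Jᵀ _ hJtdet]
end

section
/- Let a, b, c, d, g, h, u ∈ ℝ with a ≠ 0, b ≠ 0, c ≠ 0, d ≠ 0, and set D := cd − bc − ad; assume D ≠ 0. Consider the 6×6 matrix M̂ with rows (in the order labeled 1, X, Y, X², XY, Y²): row 1 = ((b²c + a²d + cdu)/(cd), a+u, b+u, c+u, u, d+u); row 2 = (a+u, c+u, u, (c²+au)/a, u, u); row 3 = (b+u, u, d+u, u, u, (d²+bu)/b); row 4 = (c+u, (c²+au)/a, u, g+u, u, u); row 5 = (u, u, u, u, u, u); row 6 = (d+u, u, (d²+bu)/b, u, u, h+u). Then the column of M̂ labeled XY satisfies the relation XY = ξ·1 − η·X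 − θ·Y in the column space of M̂, where ξ = cd/D, η = ad/D, θ = bc/D; that is, column 5 of M̂ equals ξ times column 1 minus η times column 2 minus θ times column 3. -/
/-!
Multiply through by `D = cd − bc − ad` and split `M` into `u` times the all-ones matrix plus a
`u`-free part. The `u`-part satisfies the relation because `cd − ad − bc = D`; the `u`-free part
has a zero `XY` column and every row satisfies `cd · 1 = ad · X + bc · Y`, once the fractions are
cancelled using `a, b, c, d ≠ 0`.
-/

theorem eq_div_mul_sub_div_mul_sub_div_mul_of_mul_eq {K : Type*} [Field K]
    {D p q r w x y z : K} (hD : D ≠ 0) (h : D * w = p * x - q * y - r * z) :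
    w = p / D * x - q / D * y - r / D * z := by
  field_simp
  linear_combination h

/-- For the explicit rank-5 summand `M̂` arising in the proof of the
main theorem, the column labeled `XY` (the fifth column) satisfies the relation
`XY = ξ·1 − η·X − θ·Y` with `ξ = cd/D`, `η = ad/D`, `θ = bc/D`, `D = cd − bc − ad`. -/
theorem column_relation_of_Mhat
    (a b c d g h u : ℝ)
    (ha : a ≠ 0) (hb : b ≠ 0) (hc : c ≠ 0) (hd : d ≠ 0)
    (hD : c * d - b * c - a * d ≠ 0)
    (M : Matrix (Fin 6) (Fin 6) ℝ)
    (hM : M = !![(b^2*c + a^2*d + c*d*u)/(c*d), a + u, b + u, c + u, u, d + u;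
                 a + u, c + u, u, (c^2 + a*u)/a, u, u;
                 b + u, u, d + u, u, u, (d^2 + b*u)/b;
                 c + u, (c^2 + a*u)/a, u, g + u, u, u;
                 u, u, u, u, u, u;
                 d + u, u, (d^2 + b*u)/b, u, u, h + u]) :
    ∀ i : Fin 6,
      M i 4 = (c*d / (c*d - b*c - a*d)) * M i 0
        - (a*d / (c*d - b*c - a*d)) * M i 1
        - (b*c / (c*d - b*c - a*d)) * M i 2 := by
  subst hM
  intro i
  apply eq_div_mul_sub_div_mul_sub_div_mul_of_mul_eq hD
  fin_cases i <;>
    simp only [Fin.zero_eta, Fin.mk_one, Fin.reduceFinMk, Fin.isValue, Matrix.of_apply,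
      Matrix.cons_val', Matrix.cons_val, Matrix.cons_val_fin_one, Matrix.cons_val_zero,
      Matrix.cons_val_one] <;>
    field_simp <;> ring
end

section
/- Let β^(2) = (β_{ij})_{0≤i+j≤2} be a real sequence whose 3×3 moment matrix M(1) is positive definite. Then M(1) admits a flat extension M(2), and consequently β^(2) admits a representing measure consisting of exactly 3 atoms. -/
/-!
Positive definiteness of `M(1)` gives `β₀₀ > 0` and makes `β₀₀` times the covariance matrix,
with entries `P = β₀₀β₂₀ - β₁₀²`, `Q = β₀₀β₁₁ - β₁₀β₀₁`, `R = β₀₀β₀₂ - β₀₁²`, positive definite.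
Three equally weighted points around the mean `(β₁₀, β₀₁) / β₀₀` with that covariance (the
vertices of a centred triangle pushed through a Cholesky factor of `[[P, Q], [Q, R]]`) represent
`β^(2)`. The moment matrix `M(2)` of this measure is a Gram matrix `Vᵀ diag(ρ) V` with three rows,
hence positive semidefinite of rank at most `3`, and it contains the invertible `M(1)` as a
principal submatrix; so it is a flat extension.
-/

open Matrix

section AtomicMoments

variable {ι : Type*} [Fintype ι]

def atomicMoments (x y ρ : ι → ℝ) (i j : ℕ) : ℝ := ∑ k, ρ k * x k ^ i * y k ^ j

def monomialEvalMatrix (n : ℕ) (x y : ι → ℝ) : Matrix ι (MIdx n) ℝ :=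
  fun k p => x k ^ (p.1.1 : ℕ) * y k ^ (p.1.2 : ℕ)

lemma momentMatrix_atomicMoments [DecidableEq ι] (n : ℕ) (x y ρ : ι → ℝ) :
    momentMatrix n (atomicMoments x y ρ) =
      (monomialEvalMatrix n x y)ᵀ * diagonal ρ * monomialEvalMatrix n x y := by
  ext p q
  simp only [momentMatrix, atomicMoments, monomialEvalMatrix, mul_apply, transpose_apply,
    diagonal_apply, mul_ite, mul_zero, Finset.sum_ite_eq', Finset.mem_univ, if_true, pow_add]
  exact Finset.sum_congr rfl fun k _ => by ring

lemma posSemidef_momentMatrix_atomicMoments (n : ℕ) (x y : ι → ℝ) {ρ : ι → ℝ} (hρ : 0 ≤ ρ) :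
    (momentMatrix n (atomicMoments x y ρ)).PosSemidef := by
  classical
  rw [momentMatrix_atomicMoments, ← conjTranspose_eq_transpose_of_trivial]
  exact (PosSemidef.diagonal hρ).conjTranspose_mul_mul_same _

lemma rank_momentMatrix_atomicMoments_le (n : ℕ) (x y ρ : ι → ℝ) :
    (momentMatrix n (atomicMoments x y ρ)).rank ≤ Fintype.card ι := by
  classical
  rw [momentMatrix_atomicMoments, Matrix.mul_assoc]
  exact (rank_mul_le_right _ _).trans (rank_le_card_height _)

end AtomicMoments

def MIdx.castLE {m n : ℕ} (h : m ≤ n) (p : MIdx m) : MIdx n :=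
  ⟨(Fin.castLE (by omega) p.1.1, Fin.castLE (by omega) p.1.2), p.2.trans h⟩

lemma momentMatrix_eq_submatrix {m n : ℕ} (h : m ≤ n) {β β' : ℕ → ℕ → ℝ}
    (hβ : ∀ i j, i + j ≤ 2 * m → β' i j = β i j) :
    momentMatrix m β = (momentMatrix n β').submatrix (MIdx.castLE h) (MIdx.castLE h) := by
  ext p q
  exact (hβ _ _ (by have := p.2; have := q.2; omega)).symm

lemma rank_momentMatrix_le_of_le {m n : ℕ} (h : m ≤ n) {β β' : ℕ → ℕ → ℝ}
    (hβ : ∀ i j, i + j ≤ 2 * m → β' i j = β i j) :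
    (momentMatrix m β).rank ≤ (momentMatrix n β').rank := by
  rw [momentMatrix_eq_submatrix h hβ]
  exact rank_submatrix_le _ _ _

theorem rank_momentMatrix_atomicMoments_eq {ι : Type*} [Fintype ι] {m n : ℕ} (h : m ≤ n)
    {β : ℕ → ℕ → ℝ} {x y ρ : ι → ℝ}
    (hrep : ∀ i j, i + j ≤ 2 * m → atomicMoments x y ρ i j = β i j)
    (hrank : (momentMatrix m β).rank = Fintype.card ι) :
    (momentMatrix n (atomicMoments x y ρ)).rank = (momentMatrix m β).rank :=
  le_antisymm (hrank ▸ rank_momentMatrix_atomicMoments_le n x y ρ)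
    (rank_momentMatrix_le_of_le h hrep)

/-- The coefficient vector of the affine polynomial `a + b s + c t`. -/
def linearCoeffs (a b c : ℝ) : MIdx 1 → ℝ := fun p =>
  if (p.1.1 : ℕ) = 1 then b else if (p.1.2 : ℕ) = 1 then c else a

lemma sum_MIdx_one (f : MIdx 1 → ℝ) :
    ∑ p, f p = f ⟨(0, 0), by decide⟩ + f ⟨(1, 0), by decide⟩ + f ⟨(0, 1), by decide⟩ := by
  have huniv : (Finset.univ : Finset (MIdx 1)) =
      {⟨(0, 0), by decide⟩, ⟨(1, 0), by decide⟩, ⟨(0, 1), by decide⟩} := by decide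
  rw [huniv, Finset.sum_insert (by decide), Finset.sum_insert (by decide), Finset.sum_singleton,
    add_assoc]

lemma linearCoeffs_dotProduct_momentMatrix_one (β : ℕ → ℕ → ℝ) (a b c : ℝ) :
    linearCoeffs a b c ⬝ᵥ momentMatrix 1 β *ᵥ linearCoeffs a b c =
      β 0 0 * a ^ 2 + β 2 0 * b ^ 2 + β 0 2 * c ^ 2
        + 2 * (β 1 0 * a * b + β 0 1 * a * c + β 1 1 * b * c) := by
  simp only [dotProduct, linearCoeffs, mulVec, momentMatrix, mul_ite, sum_MIdx_one, Fin.isValue,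
    Fin.coe_ofNat_eq_mod, Nat.zero_mod, zero_ne_one, ↓reduceIte, add_zero, Nat.mod_succ, ite_mul,
    zero_add, Nat.reduceAdd]
  ring

lemma linearCoeffs_eq_zero {a b c : ℝ} : linearCoeffs a b c = 0 ↔ a = 0 ∧ b = 0 ∧ c = 0 := by
  refine ⟨fun h => ⟨?_, ?_, ?_⟩, fun ⟨ha, hb, hc⟩ => ?_⟩
  · simpa [linearCoeffs] using congrFun h ⟨(0, 0), by decide⟩
  · simpa [linearCoeffs] using congrFun h ⟨(1, 0), by decide⟩
  · simpa [linearCoeffs] using congrFun h ⟨(0, 1), by decide⟩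
  · ext p; simp [linearCoeffs, ha, hb, hc]

namespace Matrix.PosDef

variable {β : ℕ → ℕ → ℝ} (hpd : (momentMatrix 1 β).PosDef)
include hpd

lemma momentMatrix_one_quadratic_pos {a b c : ℝ} (habc : a ≠ 0 ∨ b ≠ 0 ∨ c ≠ 0) :
    0 < β 0 0 * a ^ 2 + β 2 0 * b ^ 2 + β 0 2 * c ^ 2
        + 2 * (β 1 0 * a * b + β 0 1 * a * c + β 1 1 * b * c) := by
  have hne : linearCoeffs a b c ≠ 0 := by rw [Ne, linearCoeffs_eq_zero]; tauto
  simpa [linearCoeffs_dotProduct_momentMatrix_one] using hpd.dotProduct_mulVec_pos hne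

lemma moment_zero_zero_pos : 0 < β 0 0 := by
  simpa using hpd.momentMatrix_one_quadratic_pos (a := 1) (b := 0) (c := 0) (by simp)

/-- The quadratic form of `M(1)` at `s (β₀₀ X - β₁₀) + t (β₀₀ Y - β₀₁)` is `β₀₀` times this one. -/
lemma covariance_quadratic_pos {s t : ℝ} (hst : s ≠ 0 ∨ t ≠ 0) :
    0 < (β 0 0 * β 2 0 - β 1 0 ^ 2) * s ^ 2 + 2 * (β 0 0 * β 1 1 - β 1 0 * β 0 1) * s * t
      + (β 0 0 * β 0 2 - β 0 1 ^ 2) * t ^ 2 := by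
  have hb := hpd.moment_zero_zero_pos
  have h := hpd.momentMatrix_one_quadratic_pos
    (a := -(s * β 1 0 + t * β 0 1)) (b := s * β 0 0) (c := t * β 0 0) (by
      rcases hst with hs | ht
      · exact Or.inr (Or.inl (mul_ne_zero hs hb.ne'))
      · exact Or.inr (Or.inr (mul_ne_zero ht hb.ne')))
  refine pos_of_mul_pos_right (a := β 0 0) ?_ hb.le
  linear_combination h

lemma variance_pos : 0 < β 0 0 * β 2 0 - β 1 0 ^ 2 := by
  simpa using hpd.covariance_quadratic_pos (s := 1) (t := 0) (by simp)

lemma covariance_det_pos :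
    0 < (β 0 0 * β 2 0 - β 1 0 ^ 2) * (β 0 0 * β 0 2 - β 0 1 ^ 2)
      - (β 0 0 * β 1 1 - β 1 0 * β 0 1) ^ 2 := by
  have hP := hpd.variance_pos
  have h := hpd.covariance_quadratic_pos (s := β 0 0 * β 1 1 - β 1 0 * β 0 1)
    (t := -(β 0 0 * β 2 0 - β 1 0 ^ 2)) (Or.inr (neg_ne_zero.mpr hP.ne'))
  refine pos_of_mul_pos_right (a := β 0 0 * β 2 0 - β 1 0 ^ 2) ?_ hP.le
  linear_combination h

end Matrix.PosDef

/-- The points are `(α u, γ u + δ v)` for the centred orthogonal vectors `u = (2, -1, -1)`,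
`v = (0, 1, -1)` with `‖u‖² = 3 ‖v‖² = 6`. -/
lemma exists_centered_three_points {P Q R : ℝ} (hP : 0 < P) (hdet : 0 < P * R - Q ^ 2) :
    ∃ a c : Fin 3 → ℝ, Function.Injective (fun k => (a k, c k)) ∧
      ∑ k, a k = 0 ∧ ∑ k, c k = 0 ∧
      ∑ k, a k ^ 2 = 3 * P ∧ ∑ k, a k * c k = 3 * Q ∧ ∑ k, c k ^ 2 = 3 * R := by
  obtain ⟨α, hα, hα2⟩ : ∃ α : ℝ, 0 < α ∧ 2 * α ^ 2 = P :=
    ⟨√(P / 2), by positivity, by rw [Real.sq_sqrt (by positivity)]; ring⟩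
  obtain ⟨δ, hδ, hδ2⟩ : ∃ δ : ℝ, 0 < δ ∧ 2 * P * δ ^ 2 = 3 * (P * R - Q ^ 2) :=
    ⟨√(3 * (P * R - Q ^ 2) / (2 * P)), by positivity, by
      rw [Real.sq_sqrt (by positivity)]; field_simp⟩
  obtain ⟨γ, hαγ⟩ : ∃ γ : ℝ, 2 * α * γ = Q := ⟨Q / (2 * α), by field_simp⟩
  refine ⟨![2 * α, -α, -α], ![2 * γ, δ - γ, -δ - γ], ?_, ?_, ?_, ?_, ?_, ?_⟩
  · intro k l hkl
    simp only [Prod.mk.injEq] at hkl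
    fin_cases k <;> fin_cases l <;> simp at hkl ⊢ <;> linarith
  all_goals simp only [Fin.sum_univ_three, Matrix.cons_val_zero, Matrix.cons_val_one,
    Matrix.cons_val_two, Matrix.head_cons, Matrix.tail_cons]
  · ring
  · ring
  · linear_combination 3 * hα2
  · linear_combination 3 * hαγ
  · refine mul_left_cancel₀ hP.ne' ?_
    linear_combination hδ2 - 6 * γ ^ 2 * hα2 + 3 * (2 * α * γ + Q) * hαγ

theorem exists_three_atomic_representation {β : ℕ → ℕ → ℝ} (hpd : (momentMatrix 1 β).PosDef) :
    ∃ x y ρ : Fin 3 → ℝ, Function.Injective (fun k => (x k, y k)) ∧ (∀ k, 0 < ρ k) ∧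
      ∀ i j : ℕ, i + j ≤ 2 → atomicMoments x y ρ i j = β i j := by
  have hb := hpd.moment_zero_zero_pos
  obtain ⟨a, c, hinj, ha, hc, haa, hac, hcc⟩ :=
    exists_centered_three_points hpd.variance_pos hpd.covariance_det_pos
  refine ⟨fun k => (β 1 0 + a k) / β 0 0, fun k => (β 0 1 + c k) / β 0 0, fun _ => β 0 0 / 3,
    fun k l hkl => hinj ?_, fun _ => by positivity, fun i j hij => ?_⟩
  · simp only [Prod.mk.injEq] at hkl ⊢
    constructor <;> field_simp at hkl <;> linarith [hkl.1, hkl.2]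
  simp only [Fin.sum_univ_three] at ha hc haa hac hcc
  simp only [atomicMoments, Fin.sum_univ_three]
  obtain ⟨hi, hj⟩ : i ≤ 2 ∧ j ≤ 2 := by omega
  interval_cases i <;> interval_cases j <;> (try omega) <;> field_simp
  · norm_num
  · linear_combination hc
  · linear_combination 2 * β 0 1 * hc + hcc
  · linear_combination ha
  · linear_combination β 0 1 * ha + β 1 0 * hc + hac
  · linear_combination 2 * β 1 0 * ha + haa

/-- If the 3×3 moment matrix `M(1)` of a real sequence `β^(2)` is
positive definite, then `M(1)` admits a flat extension `M(2)`, and consequently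
`β^(2)` admits a representing measure consisting of exactly 3 atoms. -/
theorem posDef_M1_has_flat_extension_and_three_atomic_measure
    (β : ℕ → ℕ → ℝ)
    (hpd : (momentMatrix 1 β).PosDef) :
    (∃ β' : ℕ → ℕ → ℝ,
      (∀ i j : ℕ, i + j ≤ 2 → β' i j = β i j) ∧
      (momentMatrix 2 β').PosSemidef ∧
      (momentMatrix 2 β').rank = (momentMatrix 1 β).rank) ∧
    (∃ x y ρ : Fin 3 → ℝ,
      Function.Injective (fun k => (x k, y k)) ∧
      (∀ k, 0 < ρ k) ∧
      (∀ i j : ℕ, i + j ≤ 2 → β i j = ∑ k, ρ k * x k ^ i * y k ^ j)) := by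
  obtain ⟨x, y, ρ, hinj, hρ, hrep⟩ := exists_three_atomic_representation hpd
  have hrank : (momentMatrix 1 β).rank = Fintype.card (Fin 3) := by
    rw [rank_of_isUnit _ hpd.isUnit, Fintype.card_fin]
    rfl
  exact ⟨⟨atomicMoments x y ρ, hrep,
      posSemidef_momentMatrix_atomicMoments 2 x y fun k => (hρ k).le,
      rank_momentMatrix_atomicMoments_eq one_le_two hrep hrank⟩,
    x, y, ρ, hinj, hρ, fun i j hij => (hrep i j hij).symm⟩
end
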